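/- For a symmetric positive semidefinite matrix X ∈ R^{m×m}, it holds that tr(X^{1/2}) ≤ Σ_{j=1}^m sqrt(X_{j,j}), i.e., the trace of the matrix square root of X is at most the sum of the square roots of the diagonal entries of X. -/

import Mathlib

/-!
Write `S = X^{1/2}`. It is symmetric with `S * Sᵀ = S * S = X`, so
`X j j = ∑ k, S j k ^ 2 ≥ S j j ^ 2`, i.e. each diagonal entry of `S` is at most `√(X j j)`.
-/

open Matrix
open scoped Classical

/-- The positive semidefinite square root of a positive semidefinite real matrix
(junk value `0` if the matrix is not positive semidefinite). -/
noncomputable def psdSqrt {k : ℕ} (X : Matrix (Fin k) (Fin k) ℝ) : Matrix (Fin k) (Fin k) ℝ :=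
  if h : X.PosSemidef then
    (h.1.eigenvectorUnitary : Matrix (Fin k) (Fin k) ℝ) *
      diagonal ((↑) ∘ (√·) ∘ h.1.eigenvalues) *
      (star h.1.eigenvectorUnitary : Matrix (Fin k) (Fin k) ℝ)
  else 0

theorem Matrix.diag_le_sqrt_mul_transpose_diag {n : Type*} [Fintype n] (A : Matrix n n ℝ)
    (j : n) : A j j ≤ √((A * Aᵀ) j j) := by
  have hsq : A j j ^ 2 ≤ (A * Aᵀ) j j := by
    simpa only [sq, mul_apply, transpose_apply] using
      Finset.single_le_sum (fun k _ => mul_self_nonneg (A j k)) (Finset.mem_univ j)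
  exact (le_abs_self _).trans (Real.abs_le_sqrt hsq)

theorem Matrix.trace_le_sum_sqrt_mul_transpose_diag {n : Type*} [Fintype n]
    (A : Matrix n n ℝ) : A.trace ≤ ∑ j, √((A * Aᵀ) j j) :=
  Finset.sum_le_sum fun j _ => A.diag_le_sqrt_mul_transpose_diag j

section psdSqrt

variable {k : ℕ} {X : Matrix (Fin k) (Fin k) ℝ}

theorem psdSqrt_eq_cfc (hX : X.PosSemidef) : psdSqrt X = cfc Real.sqrt X := by
  rw [psdSqrt, dif_pos hX, hX.1.cfc_eq, IsHermitian.cfc, Unitary.conjStarAlgAut_apply]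
  rfl

theorem transpose_psdSqrt (hX : X.PosSemidef) : (psdSqrt X)ᵀ = psdSqrt X := by
  rw [← conjTranspose_eq_transpose_of_trivial, psdSqrt_eq_cfc hX]
  exact IsSelfAdjoint.cfc.star_eq

theorem psdSqrt_mul_self (hX : X.PosSemidef) : psdSqrt X * psdSqrt X = X := by
  rw [psdSqrt_eq_cfc hX, ← cfc_mul Real.sqrt Real.sqrt X]
  conv_rhs => rw [← cfc_id ℝ X hX.1.isSelfAdjoint]
  exact cfc_congr fun _ hx =>
    Real.mul_self_sqrt ((posSemidef_iff_isHermitian_and_spectrum_nonneg.mp hX).2 hx)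

end psdSqrt

/-- for a symmetric positive semidefinite matrix `X ∈ ℝ^{m×m}`,
`tr(X^{1/2}) ≤ ∑_{j=1}^m sqrt(X_{j,j})`. -/
theorem stmt6 (m : ℕ) (X : Matrix (Fin m) (Fin m) ℝ) (hX : X.PosSemidef) :
    (psdSqrt X).trace ≤ ∑ j, Real.sqrt (X j j) := by
  have hsq : psdSqrt X * (psdSqrt X)ᵀ = X := by
    rw [transpose_psdSqrt hX, psdSqrt_mul_self hX]
  simpa only [hsq] using (psdSqrt X).trace_le_sum_sqrt_mul_transpose_diag
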